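/- arXiv:2412.11811 — 6 statements merged into one kernel-verified Lean document; each statement's English description precedes it below -/
import Mathlib

section
/- For any two nonempty subsets A, B of {1,...,n}, the probability over a uniformly random permutation π of {1,...,n} that min{π(a) : a ∈ A} = min{π(b) : b ∈ B} equals the Jaccard similarity |A ∩ B| / |A ∪ B|. -/
/-!
`min π(A) = min π(B)` holds exactly when the element of `A ∪ B` that `π` sends lowest lies in
`A ∩ B`. Precomposing `π` with the transposition of two elements `x, y ∈ A ∪ B` exchanges the
events "the lowest element is `x`" and "the lowest element is `y`", so this element is uniformly
distributed on `A ∪ B`.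
-/

open Finset

theorem Finset.min'_mem_iff_min'_eq_of_subset {α : Type*} [LinearOrder α] {s t : Finset α}
    (hs : s.Nonempty) (hst : s ⊆ t) :
    t.min' (hs.mono hst) ∈ s ↔ s.min' hs = t.min' (hs.mono hst) :=
  ⟨fun h => le_antisymm (min'_le s _ h) (min'_subset hs hst), fun h => h ▸ min'_mem s hs⟩

namespace Equiv

variable {α β : Type*} [LinearOrder β] {U : Finset α}

def argminOn (e : α ≃ β) (U : Finset α) (hU : U.Nonempty) : α :=
  e.symm ((U.image e).min' (hU.image e))

theorem argminOn_mem_iff (e : α ≃ β) (hU : U.Nonempty) {C : Finset α} (hC : C.Nonempty)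
    (hCU : C ⊆ U) :
    e.argminOn U hU ∈ C ↔ (C.image e).min' (hC.image e) = (U.image e).min' (hU.image e) := by
  rw [← min'_mem_iff_min'_eq_of_subset (hC.image e) (image_subset_image hCU), argminOn]
  simp [← Equiv.eq_symm_apply]

theorem argminOn_mem (e : α ≃ β) (hU : U.Nonempty) : e.argminOn U hU ∈ U :=
  (e.argminOn_mem_iff hU hU subset_rfl).2 rfl

theorem argminOn_union_mem_inter_iff [DecidableEq α] (e : α ≃ β) {A B : Finset α}
    (hA : A.Nonempty) (hB : B.Nonempty) :
    e.argminOn (A ∪ B) (hA.mono subset_union_left) ∈ A ∩ B ↔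
      (A.image e).min' (hA.image e) = (B.image e).min' (hB.image e) := by
  have hmin : ((A ∪ B).image e).min' ((hA.mono subset_union_left).image e) =
      min ((A.image e).min' (hA.image e)) ((B.image e).min' (hB.image e)) := by
    simp only [image_union]
    exact min'_union _ _
  rw [mem_inter, e.argminOn_mem_iff _ hA subset_union_left,
    e.argminOn_mem_iff _ hB subset_union_right, hmin]
  exact ⟨fun ⟨hAmin, hBmin⟩ => hAmin.trans hBmin.symm, fun h => by simp [h]⟩

theorem argminOn_perm_trans [DecidableEq α] (e : α ≃ β) (hU : U.Nonempty) {σ : Perm α}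
    (hσ : U.image σ = U) :
    (σ.trans e).argminOn U hU = σ.symm (e.argminOn U hU) := by
  have himage : U.image (σ.trans e) = U.image e := by
    rw [coe_trans, ← image_image, hσ]
  simp only [argminOn, himage, symm_trans_apply]

theorem card_argminOn_eq_mul_card [DecidableEq α] [Fintype α] [Fintype β] (hU : U.Nonempty)
    {x : α} (hx : x ∈ U) :
    #{e : α ≃ β | e.argminOn U hU = x} * #U = Fintype.card (α ≃ β) := by
  have hfiber : ∀ y ∈ U, #{e : α ≃ β | e.argminOn U hU = y} =
      #{e : α ≃ β | e.argminOn U hU = x} := by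
    intro y hy
    have hswap : U.image (swap x y) = U := coe_injective <| by
      rw [coe_image]
      exact (swap_bijOn_self (by simp [hx, hy])).image_eq
    apply card_nbij' ((swap x y).trans ·) ((swap x y).trans ·)
    · intro e he
      simp only [coe_filter, mem_univ, true_and, Set.mem_ofPred_eq] at he ⊢
      rw [argminOn_perm_trans _ _ hswap, he, symm_swap, swap_apply_right]
    · intro e he
      simp only [coe_filter, mem_univ, true_and, Set.mem_ofPred_eq] at he ⊢
      rw [argminOn_perm_trans _ _ hswap, he, symm_swap, swap_apply_left]
    all_goals intro e _; ext; simp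
  calc #{e : α ≃ β | e.argminOn U hU = x} * #U
      = ∑ y ∈ U, #{e : α ≃ β | e.argminOn U hU = y} := by
        rw [sum_congr rfl hfiber, sum_const, smul_eq_mul, mul_comm]
    _ = Fintype.card (α ≃ β) :=
        (card_eq_sum_card_fiberwise fun e _ => e.argminOn_mem hU).symm

theorem card_argminOn_mem_mul_card [DecidableEq α] [Fintype α] [Fintype β] (hU : U.Nonempty)
    {C : Finset α} (hCU : C ⊆ U) :
    #{e : α ≃ β | e.argminOn U hU ∈ C} * #U = Fintype.card (α ≃ β) * #C := by
  rw [card_eq_sum_card_fiberwise (f := fun e : α ≃ β => e.argminOn U hU) (t := C)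
    fun e he => by simpa using he, sum_mul]
  calc _ = ∑ x ∈ C, Fintype.card (α ≃ β) := sum_congr rfl fun x hx => by
        rw [filter_filter, filter_congr fun e _ => and_iff_right_of_imp (· ▸ hx),
          card_argminOn_eq_mul_card hU (hCU hx)]
    _ = Fintype.card (α ≃ β) * #C := by rw [sum_const, smul_eq_mul, mul_comm]

end Equiv

/-- For nonempty `A, B ⊆ {1,…,n}`, the number of permutations `π` of `{1,…,n}`
with `min π(A) = min π(B)` equals `n! · |A ∩ B| / |A ∪ B|`, stated
multiplicatively. -/
theorem stmt_3 (n : ℕ) (A B : Finset (Fin n)) (hA : A.Nonempty) (hB : B.Nonempty) :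
    (Finset.univ.filter fun π : Equiv.Perm (Fin n) =>
        (A.image π).min' (hA.image π) = (B.image π).min' (hB.image π)).card
      * (A ∪ B).card = Nat.factorial n * (A ∩ B).card := by
  rw [filter_congr fun π _ => (π.argminOn_union_mem_inter_iff hA hB).symm,
    Equiv.card_argminOn_mem_mul_card _ inter_subset_union, Fintype.card_perm, Fintype.card_fin]
end

section
/- A family of permutations of {1,...,n} (n ≥ 3) is 3-restricted minwise independent if and only if it is 3-rankwise independent. -/
/-!
Write `N(a, b, c)` for the number of permutations ranking `a < b < c`. The permutations
in which `x` is minimal in `{x, y, z}` are those ranking `x < y < z` or `x < z < y`, and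
those in which `x` is minimal in `{x, y}` split, according to where a third element `z`
falls, into those ranking `z < x < y`, `x < z < y` or `x < y < z`. Hence if every `N` is
`d / 6`, the minima counts are `d / 2` and `d / 3`; conversely
`N(a, b, c) = #(b minimal in {b, c}) - #(b minimal in {a, b, c}) = d / 2 - d / 3 = d / 6`.
-/

open Finset Function

section

variable {ι α β : Type*} [Fintype ι] [LinearOrder β] (f : ι → α → β)

def rankCount (a b c : α) : ℕ := #{i | f i a < f i b ∧ f i b < f i c}

def IsRankwiseIndependent3 : Prop :=
  ∀ a b c, a ≠ b → a ≠ c → b ≠ c → rankCount f a b c * 6 = Fintype.card ι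

def minCount [DecidableEq α] (X : Finset α) (x : α) : ℕ := #{i | ∀ y ∈ X, f i x ≤ f i y}

def IsMinwiseIndependent3 [DecidableEq α] : Prop :=
  ∀ X : Finset α, #X ≤ 3 → ∀ x ∈ X, minCount f X x * #X = Fintype.card ι

variable {f}

theorem card_lt_eq_rankCount_add (hf : ∀ i, Injective (f i)) {a b c : α}
    (hac : a ≠ c) (hbc : b ≠ c) :
    #{i | f i a < f i b} = rankCount f c a b + rankCount f a c b + rankCount f a b c := by
  simp only [rankCount, card_filter, ← sum_add_distrib]
  refine sum_congr rfl fun i _ => ?_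
  have := (hf i).ne hac
  have := (hf i).ne hbc
  grind

theorem card_lt_and_lt_eq_rankCount_add (hf : ∀ i, Injective (f i)) {a b c : α}
    (hbc : b ≠ c) :
    #{i | f i a < f i b ∧ f i a < f i c} = rankCount f a b c + rankCount f a c b := by
  simp only [rankCount, card_filter, ← sum_add_distrib]
  refine sum_congr rfl fun i _ => ?_
  have := (hf i).ne hbc
  grind

theorem isRankwiseIndependent3_iff :
    IsRankwiseIndependent3 f ↔
      ∀ σ : Fin 3 → α, Injective σ →
        rankCount f (σ 0) (σ 1) (σ 2) * 6 = Fintype.card ι := by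
  refine ⟨fun h σ hσ => h _ _ _ (hσ.ne (by decide)) (hσ.ne (by decide)) (hσ.ne (by decide)),
    fun h a b c hab hac hbc => h ![a, b, c] ?_⟩
  intro x y
  fin_cases x <;> fin_cases y <;> simp [hab, hac, hbc, hab.symm, hac.symm, hbc.symm]

variable [DecidableEq α]

theorem minCount_singleton (x : α) : minCount f {x} x = Fintype.card ι := by
  simp [minCount]

theorem minCount_pair_eq_card_lt (hf : ∀ i, Injective (f i)) {x y : α} (hxy : x ≠ y) :
    minCount f {x, y} x = #{i | f i x < f i y} := by
  simp only [minCount, forall_mem_insert, mem_singleton, forall_eq, le_refl, true_and,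
    ((hf _).ne hxy).le_iff_lt]

theorem minCount_triple_eq_card_lt_and_lt (hf : ∀ i, Injective (f i)) {x y z : α}
    (hxy : x ≠ y) (hxz : x ≠ z) :
    minCount f {x, y, z} x = #{i | f i x < f i y ∧ f i x < f i z} := by
  simp only [minCount, forall_mem_insert, mem_singleton, forall_eq, le_refl, true_and,
    ((hf _).ne hxy).le_iff_lt, ((hf _).ne hxz).le_iff_lt]

theorem isMinwiseIndependent3_iff :
    IsMinwiseIndependent3 f ↔
      ∀ j, 1 ≤ j → j ≤ 3 → ∀ X : Finset α, #X = j → ∀ x ∈ X,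
        minCount f X x * j = Fintype.card ι := by
  refine ⟨?_, fun h X hX x hx => h _ (card_pos.2 ⟨x, hx⟩) hX X rfl x hx⟩
  rintro h j - hj X rfl x hx
  exact h X hj x hx

theorem IsMinwiseIndependent3.isRankwiseIndependent3 (hf : ∀ i, Injective (f i))
    (h : IsMinwiseIndependent3 f) : IsRankwiseIndependent3 f := by
  intro a b c hab hac hbc
  have hpair := h {b, c} (card_le_two.trans (by norm_num)) b (mem_insert_self b _)
  have htriple := h {b, a, c} card_le_three b (mem_insert_self b _)
  rw [card_pair hbc, minCount_pair_eq_card_lt hf hbc,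
    card_lt_eq_rankCount_add hf hab.symm hac.symm] at hpair
  rw [card_insert_of_notMem (by simp [hab.symm, hbc]), card_pair hac,
    minCount_triple_eq_card_lt_and_lt hf hab.symm hbc,
    card_lt_and_lt_eq_rankCount_add hf hac] at htriple
  omega

theorem IsRankwiseIndependent3.minCount_pair_mul_two (hf : ∀ i, Injective (f i))
    (h : IsRankwiseIndependent3 f) (hα : 3 ≤ ENat.card α) {x y : α} (hxy : x ≠ y) :
    minCount f {x, y} x * 2 = Fintype.card ι := by
  obtain ⟨z, hzx, hzy⟩ := ENat.exists_ne_ne_of_three_le hα x y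
  rw [minCount_pair_eq_card_lt hf hxy, card_lt_eq_rankCount_add hf hzx.symm hzy.symm]
  have := h z x y hzx hzy hxy
  have := h x z y hzx.symm hxy hzy
  have := h x y z hxy hzx.symm hzy.symm
  omega

theorem IsRankwiseIndependent3.minCount_triple_mul_three (hf : ∀ i, Injective (f i))
    (h : IsRankwiseIndependent3 f) {x y z : α} (hxy : x ≠ y) (hxz : x ≠ z) (hyz : y ≠ z) :
    minCount f {x, y, z} x * 3 = Fintype.card ι := by
  rw [minCount_triple_eq_card_lt_and_lt hf hxy hxz, card_lt_and_lt_eq_rankCount_add hf hyz]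
  have := h x y z hxy hxz hyz
  have := h x z y hxz hxy hyz.symm
  omega

theorem IsRankwiseIndependent3.isMinwiseIndependent3 (hf : ∀ i, Injective (f i))
    (h : IsRankwiseIndependent3 f) (hα : 3 ≤ ENat.card α) : IsMinwiseIndependent3 f := by
  intro X hX x hx
  obtain ⟨Y, hxY, rfl⟩ : ∃ Y, x ∉ Y ∧ X = insert x Y :=
    ⟨X.erase x, notMem_erase x X, (insert_erase hx).symm⟩
  rw [card_insert_of_notMem hxY] at hX ⊢
  obtain hY | hY | hY : #Y = 0 ∨ #Y = 1 ∨ #Y = 2 := by omega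
  · obtain rfl := card_eq_zero.1 hY
    simp [minCount_singleton]
  · obtain ⟨y, rfl⟩ := card_eq_one.1 hY
    rw [hY]
    exact h.minCount_pair_mul_two hf hα (notMem_singleton.1 hxY)
  · obtain ⟨y, z, hyz, rfl⟩ := card_eq_two.1 hY
    simp only [mem_insert, mem_singleton, not_or] at hxY
    rw [hY]
    exact h.minCount_triple_mul_three hf hxY.1 hxY.2 hyz

theorem isMinwiseIndependent3_iff_isRankwiseIndependent3 (hf : ∀ i, Injective (f i))
    (hα : 3 ≤ ENat.card α) : IsMinwiseIndependent3 f ↔ IsRankwiseIndependent3 f :=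
  ⟨(·.isRankwiseIndependent3 hf), (·.isMinwiseIndependent3 hf hα)⟩

end

/-- For `n ≥ 3`, a family of permutations of `{1,…,n}` is 3-restricted minwise
independent iff it is 3-rankwise independent. -/
theorem stmt_6 (n d : ℕ) (hn : 3 ≤ n) (π : Fin d → Equiv.Perm (Fin n)) :
    (∀ j, 1 ≤ j → j ≤ 3 → ∀ X : Finset (Fin n), X.card = j → ∀ x ∈ X,
        (Finset.univ.filter fun i : Fin d => ∀ y ∈ X, π i x ≤ π i y).card * j = d)
      ↔
    (∀ σ : Fin 3 → Fin n, Function.Injective σ →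
        (Finset.univ.filter fun i : Fin d =>
          π i (σ 0) < π i (σ 1) ∧ π i (σ 1) < π i (σ 2)).card * 6 = d) := by
  have hf : ∀ i, Injective ⇑(π i) := fun i => (π i).injective
  have hα : 3 ≤ ENat.card (Fin n) := by simpa using hn
  have key := isMinwiseIndependent3_iff.symm.trans <|
    (isMinwiseIndependent3_iff_isRankwiseIndependent3 hf hα).trans isRankwiseIndependent3_iff
  simpa only [minCount, rankCount, Fintype.card_fin] using key
end

section
/- Every k-rankwise independent family of permutations of {1,...,n} (with k ≤ n) is k-restricted minwise independent. -/
/-!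
Write `M(τ)` for the set of indices `i` such that `π i` is increasing along an injective tuple
`τ` of length `t`. If `z` is not an entry of `τ`, then for each `i ∈ M(τ)` there is exactly one
position at which `z` can be inserted into `τ` keeping `π i` increasing, so `M(τ)` is the disjoint
union of the `t + 1` sets `M(Fin.insertNth p z τ)`; this carries rankwise independence from `k`
down to every `j ≤ k`, a fresh `z` being available because `k ≤ n`.

For minwise independence let `N(τ, Y)` (`initialRankSet`) be the set of `i` for which `π i` is
increasing along `τ` and maps every entry of `τ` below all of `Y`. Splitting on the `π i`-least
element of `Y`, which is then appended to `τ`, gives `|N(τ, Y)| * (t + s)! = d * s!` for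
`s = |Y|` by induction on `s`. Finally `x` is the `π i`-minimum of `X` exactly when
`i ∈ N((x), X \ {x})`.
-/

open Finset Function

lemma Finset.card_eq_sum_card_of_existsUnique {ι κ : Type*} {s : Finset ι} {T : Finset κ}
    {F : κ → Finset ι} (hsub : ∀ t ∈ T, F t ⊆ s) (hu : ∀ i ∈ s, ∃! t, t ∈ T ∧ i ∈ F t) :
    #s = ∑ t ∈ T, #(F t) := by
  classical
  rw [← card_biUnion]
  · congr 1
    ext i
    simp only [mem_biUnion]
    refine ⟨fun hi => ?_, fun ⟨t, ht, hit⟩ => hsub t ht hit⟩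
    obtain ⟨t, ht, -⟩ := hu i hi
    exact ⟨t, ht⟩
  · intro t ht t' ht' hne
    rw [Function.onFun, disjoint_left]
    exact fun i hi hi' => hne ((hu i (hsub t ht hi)).unique ⟨ht, hi⟩ ⟨ht', hi'⟩)

lemma Fin.comp_insertNth {α β : Type*} {n : ℕ} (g : α → β) (p : Fin (n + 1)) (x : α)
    (f : Fin n → α) : g ∘ p.insertNth x f = p.insertNth (g x) (g ∘ f) := by
  rw [← Fin.cons_comp_cycleRange, ← Fin.cons_comp_cycleRange, ← Function.comp_assoc,
    Fin.comp_cons]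

lemma Fin.insertNth_injective {α : Type*} {n : ℕ} {p : Fin (n + 1)} {x : α} {f : Fin n → α}
    (hf : Injective f) (hx : x ∉ Set.range f) : Injective (p.insertNth x f) := by
  rw [← Fin.cons_comp_cycleRange]
  exact (Fin.cons_injective_iff.2 ⟨hx, hf⟩).comp p.cycleRange.injective

lemma Fin.existsUnique_le_castSucc_iff {n : ℕ} {P : Fin n → Prop} (hP : Monotone P) :
    ∃! q : Fin (n + 1), ∀ a, q ≤ a.castSucc ↔ P a := by
  classical
  refine existsUnique_of_exists_of_unique ?_ fun q₁ q₂ h₁ h₂ => ?_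
  · by_cases h : ({a | P a} : Finset (Fin n)).Nonempty
    · refine ⟨(({a | P a} : Finset (Fin n)).min' h).castSucc, fun a => ?_⟩
      rw [Fin.castSucc_le_castSucc_iff]
      refine ⟨fun ha => hP ha (mem_filter.1 (min'_mem _ h)).2, fun ha => min'_le _ _ ?_⟩
      simpa using ha
    · refine ⟨Fin.last n, fun a => ?_⟩
      simp only [not_nonempty_iff_eq_empty, filter_eq_empty_iff, mem_univ, true_imp_iff] at h
      simp [@h a, (Fin.castSucc_lt_last a).not_ge]
  · have hle : ∀ q q' : Fin (n + 1),
        (∀ a : Fin n, q ≤ a.castSucc ↔ q' ≤ a.castSucc) → q ≤ q' := by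
      intro q q' h
      by_contra! hlt
      have hq' : q' ≠ Fin.last n := (hlt.trans_le (Fin.le_last q)).ne
      exact hlt.not_ge (by simpa using (h (q'.castPred hq')).2 (by simp))
    exact le_antisymm (hle _ _ fun a => (h₁ a).trans (h₂ a).symm)
      (hle _ _ fun a => (h₂ a).trans (h₁ a).symm)

lemma Fin.strictMono_snoc_iff {α : Type*} [Preorder α] {n : ℕ} {f : Fin n → α} {x : α} :
    StrictMono (Fin.snoc f x : Fin (n + 1) → α) ↔ StrictMono f ∧ ∀ i, f i < x := by
  rw [← Fin.insertNth_last', Fin.strictMono_insertNth_iff]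
  simp [Fin.castSucc_lt_last, (Fin.castSucc_lt_last _).not_ge]

section LinearOrder

variable {α β : Type*} [LinearOrder β] {g : α → β} {n : ℕ}

lemma strictMono_comp_insertNth_iff (hg : Injective g) {p : Fin (n + 1)} {z : α}
    {τ : Fin n → α} (hz : z ∉ Set.range τ) :
    StrictMono (g ∘ p.insertNth z τ) ↔
      StrictMono (g ∘ τ) ∧ ∀ a, p ≤ a.castSucc ↔ g z < g (τ a) := by
  rw [Fin.comp_insertNth, Fin.strictMono_insertNth_iff]
  refine and_congr_right fun _ => ⟨fun ⟨hlt, hgt⟩ a => ⟨hgt a, fun h => ?_⟩,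
    fun h => ⟨fun a ha => ?_, fun a ha => (h a).1 ha⟩⟩
  · by_contra hpa
    exact h.not_gt (hlt a (not_le.1 hpa))
  · have hne : g (τ a) ≠ g z := hg.ne fun e => hz ⟨a, e⟩
    exact lt_of_le_of_ne (not_lt.1 fun h' => ha.not_ge ((h a).2 h')) hne

lemma existsUnique_strictMono_comp_insertNth (hg : Injective g) {z : α} {τ : Fin n → α}
    (hz : z ∉ Set.range τ) (hτ : StrictMono (g ∘ τ)) :
    ∃! p : Fin (n + 1), StrictMono (g ∘ p.insertNth z τ) := by
  simp_rw [strictMono_comp_insertNth_iff hg hz]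
  simpa only [hτ, true_and] using Fin.existsUnique_le_castSucc_iff
    fun a b hab (h : g z < g (τ a)) => h.trans_le (hτ.monotone hab)

lemma forall_mem_erase_lt_iff_forall_mem_le [DecidableEq α] (hg : Injective g) {X : Finset α}
    {x : α} (hx : x ∈ X) : (∀ y ∈ X.erase x, g x < g y) ↔ ∀ y ∈ X, g x ≤ g y := by
  refine ⟨fun h y hy => ?_, fun h y hy => (h y (mem_of_mem_erase hy)).lt_of_ne ?_⟩
  · obtain rfl | hne := eq_or_ne y x
    exacts [le_rfl, (h y (mem_erase.2 ⟨hne, hy⟩)).le]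
  · exact hg.ne (ne_of_mem_erase hy).symm

lemma strictMono_comp_snoc_and_lt_iff [DecidableEq α] (hg : Injective g) {τ : Fin n → α}
    {Y : Finset α} {y : α} (hy : y ∈ Y) :
    (StrictMono (g ∘ (Fin.snoc τ y : Fin (n + 1) → α)) ∧
        ∀ a, ∀ y' ∈ Y.erase y, g ((Fin.snoc τ y : Fin (n + 1) → α) a) < g y') ↔
      (StrictMono (g ∘ τ) ∧ ∀ a, ∀ y' ∈ Y, g (τ a) < g y') ∧ ∀ y' ∈ Y, g y ≤ g y' := by
  rw [Fin.comp_snoc, Fin.strictMono_snoc_iff]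
  simp only [Fin.forall_fin_succ', Fin.snoc_castSucc, Fin.snoc_last, mem_erase]
  constructor
  · rintro ⟨⟨hτ, hτy⟩, hτY, hyY⟩
    refine ⟨⟨hτ, fun a y' hy' => ?_⟩, fun y' hy' => ?_⟩ <;> obtain rfl | hne := eq_or_ne y' y
    exacts [hτy a, hτY a y' ⟨hne, hy'⟩, le_rfl, (hyY y' ⟨hne, hy'⟩).le]
  · rintro ⟨⟨hτ, hτY⟩, hyY⟩
    exact ⟨⟨hτ, fun a => hτY a y hy⟩, fun a y' hy' => hτY a y' hy'.2,
      fun y' hy' => (hyY y' hy'.2).lt_of_ne (hg.ne hy'.1.symm)⟩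

end LinearOrder

section Rankwise

open scoped Classical Nat

variable {ι α β : Type*} [Fintype ι] [LinearOrder β]

def IsRankwiseIndependent (f : ι → α → β) (k : ℕ) : Prop :=
  ∀ σ : Fin k → α, Injective σ → #{i | StrictMono (f i ∘ σ)} * k ! = Fintype.card ι

def initialRankSet (f : ι → α → β) {t : ℕ} (τ : Fin t → α) (Y : Finset α) : Finset ι :=
  {i | StrictMono (f i ∘ τ) ∧ ∀ a, ∀ y ∈ Y, f i (τ a) < f i y}

variable {f : ι → α → β}

lemma card_filter_strictMono_eq_sum_insertNth (hf : ∀ i, Injective (f i)) {t : ℕ}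
    {τ : Fin t → α} {z : α} (hz : z ∉ Set.range τ) :
    #{i | StrictMono (f i ∘ τ)} = ∑ p : Fin (t + 1), #{i | StrictMono (f i ∘ p.insertNth z τ)} := by
  refine card_eq_sum_card_of_existsUnique (fun p _ i hi => ?_) fun i hi => ?_
  · simp only [mem_filter, mem_univ, true_and] at hi ⊢
    exact ((strictMono_comp_insertNth_iff (hf i) hz).1 hi).1
  · simp only [mem_filter, mem_univ, true_and] at hi ⊢
    exact existsUnique_strictMono_comp_insertNth (hf i) hz hi

lemma card_initialRankSet_eq_sum_snoc (hf : ∀ i, Injective (f i)) {t : ℕ} (τ : Fin t → α)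
    {Y : Finset α} (hY : Y.Nonempty) :
    #(initialRankSet f τ Y) =
      ∑ y ∈ Y, #(initialRankSet f (Fin.snoc τ y : Fin (t + 1) → α) (Y.erase y)) := by
  refine card_eq_sum_card_of_existsUnique (fun y hy i hi => ?_) fun i hi => ?_
  · simp only [initialRankSet, mem_filter, mem_univ, true_and] at hi ⊢
    exact ((strictMono_comp_snoc_and_lt_iff (hf i) hy).1 hi).1
  · simp only [initialRankSet, mem_filter, mem_univ, true_and] at hi ⊢
    obtain ⟨y, hy, hmin⟩ := Y.exists_min_image (f i) hY
    refine ⟨y, ⟨hy, (strictMono_comp_snoc_and_lt_iff (hf i) hy).2 ⟨hi, hmin⟩⟩,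
      fun y' ⟨hy', hi'⟩ => (hf i).eq_iff.1 ?_⟩
    exact le_antisymm (((strictMono_comp_snoc_and_lt_iff (hf i) hy').1 hi').2 y hy) (hmin y' hy')

namespace IsRankwiseIndependent

lemma of_succ (hf : ∀ i, Injective (f i)) {k : ℕ} (h : IsRankwiseIndependent f (k + 1))
    (hk : k < Nat.card α) : IsRankwiseIndependent f k := by
  intro τ hτ
  obtain ⟨z, hz⟩ : ∃ z, z ∉ Set.range τ := by
    by_contra! hsurj
    have := Nat.card_le_card_of_surjective τ hsurj
    simp only [Nat.card_eq_fintype_card, Fintype.card_fin] at this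
    omega
  apply Nat.eq_of_mul_eq_mul_left k.succ_pos
  calc (k + 1) * (#{i | StrictMono (f i ∘ τ)} * k !)
      = ∑ p : Fin (k + 1), #{i | StrictMono (f i ∘ p.insertNth z τ)} * (k + 1)! := by
        rw [← sum_mul, ← card_filter_strictMono_eq_sum_insertNth hf hz, Nat.factorial_succ]
        ring
    _ = (k + 1) * Fintype.card ι := by
        simp [h _ (Fin.insertNth_injective hτ hz)]

lemma mono (hf : ∀ i, Injective (f i)) {j k : ℕ} (h : IsRankwiseIndependent f k) (hjk : j ≤ k)
    (hk : k ≤ Nat.card α) : IsRankwiseIndependent f j := by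
  induction hjk using Nat.decreasingInduction with
  | self => exact h
  | of_succ j hj ih => exact ih.of_succ hf (by omega)

lemma card_initialRankSet_mul (hf : ∀ i, Injective (f i)) {j : ℕ}
    (h : IsRankwiseIndependent f j) {t : ℕ} {τ : Fin t → α} (hτ : Injective τ) {Y : Finset α}
    (hY : ∀ a, τ a ∉ Y) (htY : t + #Y = j) :
    #(initialRankSet f τ Y) * j ! = Fintype.card ι * (#Y)! := by
  obtain ⟨s, hs⟩ : ∃ s, #Y = s := ⟨_, rfl⟩
  induction s generalizing t τ Y with
  | zero =>
    obtain rfl := card_eq_zero.1 hs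
    obtain rfl : t = j := by simpa using htY
    simpa [initialRankSet] using h τ hτ
  | succ s ih =>
    have hsnoc : ∀ y ∈ Y, #(initialRankSet f (Fin.snoc τ y : Fin (t + 1) → α) (Y.erase y)) * j !
        = Fintype.card ι * s ! := fun y hy => by
      have hyτ : y ∉ Set.range τ := fun ⟨a, ha⟩ => hY a (ha ▸ hy)
      have hY' : ∀ a, (Fin.snoc τ y : Fin (t + 1) → α) a ∉ Y.erase y := Fin.lastCases
        (by simp) fun a => by simpa using fun _ => hY a
      have hcard : #(Y.erase y) = s := by rw [card_erase_of_mem hy, hs]; rfl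
      simpa [hcard] using ih (Fin.snoc_injective_of_injective hτ hyτ) hY' (by omega) hcard
    rw [card_initialRankSet_eq_sum_snoc hf τ (card_pos.1 (by omega)), sum_mul,
      sum_congr rfl hsnoc, sum_const, hs, smul_eq_mul, Nat.factorial_succ]
    ring

lemma card_filter_forall_le_mul (hf : ∀ i, Injective (f i)) {j : ℕ}
    (h : IsRankwiseIndependent f j) {X : Finset α} (hX : #X = j) {x : α} (hx : x ∈ X) :
    #{i | ∀ y ∈ X, f i x ≤ f i y} * j = Fintype.card ι := by
  obtain ⟨m, rfl⟩ : ∃ m, j = m + 1 := ⟨j - 1, by have := card_pos.2 ⟨x, hx⟩; omega⟩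
  have hset : initialRankSet f (fun _ : Fin 1 => x) (X.erase x) =
      ({i | ∀ y ∈ X, f i x ≤ f i y} : Finset ι) := by
    ext i
    rw [mem_filter, ← forall_mem_erase_lt_iff_forall_mem_le (hf i) hx]
    simp [initialRankSet, Subsingleton.strictMono]
  have hcount := card_initialRankSet_mul hf h (τ := fun _ : Fin 1 => x)
    (injective_of_subsingleton _) (Y := X.erase x) (by simp) (by rw [card_erase_of_mem hx, hX]; omega)
  rw [hset, card_erase_of_mem hx, hX, Nat.add_sub_cancel, Nat.factorial_succ] at hcount
  apply Nat.eq_of_mul_eq_mul_right m.factorial_pos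
  rw [mul_assoc, hcount]

end IsRankwiseIndependent

end Rankwise

/-- Every `k`-rankwise independent family of permutations of `{1,…,n}`
(with `k ≤ n`) is `k`-restricted minwise independent. -/
theorem stmt_7 (n k d : ℕ) (hk : k ≤ n) (π : Fin d → Equiv.Perm (Fin n))
    (hrank : ∀ σ : Fin k → Fin n, Function.Injective σ →
      (Finset.univ.filter fun i : Fin d =>
        StrictMono fun a : Fin k => π i (σ a)).card * Nat.factorial k = d) :
    ∀ j, 1 ≤ j → j ≤ k → ∀ X : Finset (Fin n), X.card = j → ∀ x ∈ X,
      (Finset.univ.filter fun i : Fin d => ∀ y ∈ X, π i x ≤ π i y).card * j = d := by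
  intro j _ hjk X hX x hx
  have hπ : ∀ i, Injective (π i) := fun i => (π i).injective
  have hrank' : IsRankwiseIndependent (fun i => ⇑(π i)) k := fun σ hσ => by
    simpa [Function.comp_def] using hrank σ hσ
  have hmin := (hrank'.mono hπ hjk (by simpa using hk)).card_filter_forall_le_mul hπ hX hx
  rw [Fintype.card_fin] at hmin
  convert hmin
end

section
/- If F = (π₁,...,π_d) ⊆ S_n is k-restricted minwise independent on {1,...,n} and k ≤ n−1, then the family (π̃₁,...,π̃_d) of permutations of {1,...,n−1} obtained by deleting the symbol n from each π_i, i.e., π̃_i(x) = π_i(x) if π_i(x) < π_i(n) and π̃_i(x) = π_i(x) − 1 if π_i(x) > π_i(n) for x ∈ {1,...,n−1}, is k-restricted minwise independent on {1,...,n−1}. -/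
/-- Deleting the largest symbol from each member of a `k`-restricted minwise
independent family of permutations of `{1,…,n+1}` (and compressing the values
accordingly: `π̃ᵢ(x) = πᵢ(x)` if `πᵢ(x) < πᵢ(n+1)` and `π̃ᵢ(x) = πᵢ(x) − 1`
otherwise) yields a `k`-restricted minwise independent family of permutations
of `{1,…,n}` of the same size `d`, provided `k ≤ n`. -/
theorem stmt_8 (n k d : ℕ) (hk : k ≤ n)
    (π : Fin d → Equiv.Perm (Fin (n + 1)))
    (hmin : ∀ j, 1 ≤ j → j ≤ k → ∀ X : Finset (Fin (n + 1)), X.card = j → ∀ x ∈ X,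
      (Finset.univ.filter fun i : Fin d => ∀ y ∈ X, π i x ≤ π i y).card * j = d)
    (π' : Fin d → Equiv.Perm (Fin n))
    (hdel : ∀ i : Fin d, ∀ x : Fin n,
      (π' i x : ℕ) =
        if (π i x.castSucc : ℕ) < (π i (Fin.last n) : ℕ)
        then (π i x.castSucc : ℕ)
        else (π i x.castSucc : ℕ) - 1) :
    ∀ j, 1 ≤ j → j ≤ k → ∀ X : Finset (Fin n), X.card = j → ∀ x ∈ X,
      (Finset.univ.filter fun i : Fin d => ∀ y ∈ X, π' i x ≤ π' i y).card * j = d := by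
  intro j h1 hj X hX x hx
  have hne : ∀ (i : Fin d) (z : Fin n),
      (π i z.castSucc : ℕ) ≠ (π i (Fin.last n) : ℕ) := by
    intro i z h
    have : z.castSucc = Fin.last n := (π i).injective (Fin.val_injective h)
    exact absurd this (Fin.ne_of_lt (Fin.castSucc_lt_last z))
  have key : ∀ (i : Fin d) (a b : Fin n), π' i a ≤ π' i b ↔ π i a.castSucc ≤ π i b.castSucc := by
    intro i a b
    rw [Fin.le_def, Fin.le_def, hdel i a, hdel i b]
    have ha := hne i a
    have hb := hne i b
    split_ifs <;> omega
  let emb : Fin n ↪ Fin (n + 1) := ⟨Fin.castSucc, Fin.castSucc_injective n⟩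
  have := hmin j h1 hj (X.map emb) (by rw [Finset.card_map, hX]) x.castSucc
    (Finset.mem_map_of_mem emb hx)
  have hset : (Finset.univ.filter fun i : Fin d => ∀ y ∈ X, π' i x ≤ π' i y)
      = (Finset.univ.filter fun i : Fin d => ∀ y ∈ X.map emb, π i x.castSucc ≤ π i y) := by
    apply Finset.filter_congr
    intro i _
    constructor
    · intro h y' hy'
      obtain ⟨y, hy, rfl⟩ := Finset.mem_map.mp hy'
      exact (key i x y).mp (h y hy)
    · intro h y hy
      exact (key i x y).mpr (h y.castSucc (Finset.mem_map_of_mem emb hy))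
  rw [hset]
  exact this
end

section
/- There is an explicit bijection between the set of permutations of {1,...,n} with exactly k fixed points and the set of permutations of {1,...,n} with exactly k waste indices; in particular these two sets have equal cardinality for every n ≥ 1 and 0 ≤ k ≤ n. -/
/-- An index `j` of a permutation `τ` of `{1,…,n}` (0-indexed on `Fin n`) is a
*waste index* if either `j` is the last index and `τ j` is the minimum value,
or `j` is not last, `τ j = min {τ 0, …, τ j}` and `τ j > τ (j+1)`. -/
def IsWaste {n : ℕ} (τ : Equiv.Perm (Fin n)) (j : Fin n) : Prop :=
  ((j : ℕ) + 1 = n ∧ (τ j : ℕ) = 0) ∨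
  (∃ h : (j : ℕ) + 1 < n, (∀ l ≤ j, τ j ≤ τ l) ∧ τ ⟨(j : ℕ) + 1, h⟩ < τ j)

namespace W13
open Equiv

attribute [local instance] Classical.propDecidable

variable {n : ℕ}

/-- `j` is a left-to-right minimum position of `τ`. -/
def L (τ : Perm (Fin n)) (j : Fin n) : Prop := ∀ l ≤ j, τ j ≤ τ l

abbrev P (τ : Perm (Fin n)) (i : ℕ) : Prop := ∃ h : i < n, L τ ⟨i, h⟩

noncomputable def sN (τ : Perm (Fin n)) (j : ℕ) : ℕ := Nat.findGreatest (P τ) j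

lemma sN_le (τ : Perm (Fin n)) (j : ℕ) : sN τ j ≤ j := Nat.findGreatest_le j

/-- Position of the last left-to-right minimum up to `j` (the "block start"). -/
noncomputable def s (τ : Perm (Fin n)) (j : Fin n) : Fin n :=
  ⟨sN τ (j : ℕ), lt_of_le_of_lt (sN_le τ j) j.isLt⟩

lemma s_le (τ : Perm (Fin n)) (j : Fin n) : s τ j ≤ j := sN_le τ j

lemma L_of_val0 {τ : Perm (Fin n)} {j : Fin n} (h : (j : ℕ) = 0) : L τ j := by
  intro l hl
  have hv : (l : ℕ) = (j : ℕ) := by have := Fin.le_def.mp hl; omega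
  rw [Fin.ext hv]

lemma L_s (τ : Perm (Fin n)) (j : Fin n) : L τ (s τ j) := by
  have h0 : P τ 0 := ⟨lt_of_le_of_lt (Nat.zero_le _) j.isLt, L_of_val0 rfl⟩
  have := Nat.findGreatest_spec (Nat.zero_le (j : ℕ)) h0
  obtain ⟨h, hL⟩ := this
  exact hL

lemma le_s (τ : Perm (Fin n)) {j b : Fin n} (hb : b ≤ j) (hL : L τ b) : b ≤ s τ j := by
  have : (b : ℕ) ≤ sN τ (j : ℕ) :=
    Nat.le_findGreatest (Fin.le_def.mp hb) ⟨b.isLt, by simpa using hL⟩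
  exact Fin.le_def.mpr this

lemma s_greatest (τ : Perm (Fin n)) {j i : Fin n} (h1 : s τ j < i) (h2 : i ≤ j) : ¬ L τ i := by
  intro hL
  have h1' : sN τ (j : ℕ) < (i : ℕ) := Fin.lt_def.mp h1
  exact Nat.findGreatest_is_greatest (P := P τ) h1' (Fin.le_def.mp h2)
    ⟨i.isLt, by simpa using hL⟩

lemma s_eq_of_L {τ : Perm (Fin n)} {j : Fin n} (h : L τ j) : s τ j = j :=
  le_antisymm (s_le τ j) (le_s τ le_rfl h)

lemma sN_succ_of_not (τ : Perm (Fin n)) (m : ℕ) (h : ¬ P τ (m + 1)) :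
    sN τ (m + 1) = sN τ m := by
  unfold sN
  rw [Nat.findGreatest_succ, if_neg h]

/-- `τ (s τ j)` is the minimum of the prefix `τ 0, …, τ j`. -/
lemma s_min (τ : Perm (Fin n)) : ∀ (m : ℕ) (j l : Fin n), (j : ℕ) ≤ m → l ≤ j →
    τ (s τ j) ≤ τ l := by
  intro m
  induction m with
  | zero =>
    intro j l hj hl
    have hj0 : (j : ℕ) = 0 := Nat.le_zero.mp hj
    have hs : s τ j = j := s_eq_of_L (L_of_val0 hj0)
    have hlj : l = j := Fin.ext (by have := (Fin.le_def.mp hl); omega)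
    rw [hs, hlj]
  | succ m ih =>
    intro j l hj hl
    by_cases hLj : L τ j
    · rw [s_eq_of_L hLj]; exact hLj l hl
    · have hj0 : (j : ℕ) ≠ 0 := fun h => hLj (L_of_val0 h)
      have hjp : (j : ℕ) - 1 < n := lt_of_le_of_lt (Nat.sub_le _ _) j.isLt
      set jp : Fin n := ⟨(j : ℕ) - 1, hjp⟩ with hjpdef
      have hsucc : (jp : ℕ) + 1 = (j : ℕ) := by simp [hjpdef]; omega
      have hnotP : ¬ P τ ((jp : ℕ) + 1) := by
        rintro ⟨hh, hL⟩
        have : (⟨(jp : ℕ) + 1, hh⟩ : Fin n) = j := Fin.ext hsucc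
        exact hLj (this ▸ hL)
      have hsj : s τ j = s τ jp := by
        apply Fin.ext
        show sN τ (j : ℕ) = sN τ (jp : ℕ)
        rw [← hsucc]
        exact sN_succ_of_not τ _ hnotP
      have hjpm : (jp : ℕ) ≤ m := by simp [hjpdef]; omega
      rcases eq_or_lt_of_le hl with heq | hlt
      · -- l = j : use a witness of ¬ L τ j
        simp only [L, not_forall] at hLj
        obtain ⟨l', hl', hnle⟩ := hLj
        have hl'lt : τ l' < τ j := lt_of_not_ge hnle
        have hl'ne : l' ≠ j := fun h => absurd (h ▸ hl'lt) (lt_irrefl _)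
        have hl'jp : l' ≤ jp := by
          have := Fin.le_def.mp hl'
          have hne : (l' : ℕ) ≠ (j : ℕ) := fun h => hl'ne (Fin.ext h)
          exact Fin.le_def.mpr (by simp [hjpdef]; omega)
        calc τ (s τ j) = τ (s τ jp) := by rw [hsj]
          _ ≤ τ l' := ih jp l' hjpm hl'jp
          _ ≤ τ l := by rw [heq]; exact le_of_lt hl'lt
      · have hljp : l ≤ jp := by
          have := Fin.lt_def.mp hlt
          exact Fin.le_def.mpr (by simp [hjpdef]; omega)
        rw [hsj]
        exact ih jp l hjpm hljp


/-- Whether a block ends at `j`. -/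
def endAt (τ : Perm (Fin n)) (j : Fin n) : Prop :=
  ((j : ℕ) + 1 = n) ∨ ∃ h : (j : ℕ) + 1 < n, L τ ⟨(j : ℕ) + 1, h⟩

/-- The index map underlying the Foata bijection: step forward inside a block,
jump back to the block start at a block end. -/
noncomputable def nextF (τ : Perm (Fin n)) (j : Fin n) : Fin n :=
  if h : (j : ℕ) + 1 < n then
    (if L τ ⟨(j : ℕ) + 1, h⟩ then s τ j else ⟨(j : ℕ) + 1, h⟩)
  else s τ j

lemma nextF_of_end {τ : Perm (Fin n)} {j : Fin n} (h : endAt τ j) : nextF τ j = s τ j := by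
  unfold nextF
  rcases h with h | ⟨h1, h2⟩
  · rw [dif_neg (by omega)]
  · rw [dif_pos h1, if_pos h2]

lemma nextF_of_not {τ : Perm (Fin n)} {j : Fin n} (h1 : (j : ℕ) + 1 < n)
    (h2 : ¬ L τ ⟨(j : ℕ) + 1, h1⟩) : nextF τ j = ⟨(j : ℕ) + 1, h1⟩ := by
  unfold nextF
  rw [dif_pos h1, if_neg h2]

lemma endAt_or (τ : Perm (Fin n)) (j : Fin n) :
    endAt τ j ∨ ∃ h : (j : ℕ) + 1 < n, ¬ L τ ⟨(j : ℕ) + 1, h⟩ := by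
  by_cases h1 : (j : ℕ) + 1 < n
  · by_cases h2 : L τ ⟨(j : ℕ) + 1, h1⟩
    · exact Or.inl (Or.inr ⟨h1, h2⟩)
    · exact Or.inr ⟨h1, h2⟩
  · exact Or.inl (Or.inl (by have := j.isLt; omega))

lemma s_nextF (τ : Perm (Fin n)) (j : Fin n) : s τ (nextF τ j) = s τ j := by
  rcases endAt_or τ j with h | ⟨h1, h2⟩
  · rw [nextF_of_end h, s_eq_of_L (L_s τ j)]
  · rw [nextF_of_not h1 h2]
    apply Fin.ext
    show sN τ ((j : ℕ) + 1) = sN τ (j : ℕ)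
    exact sN_succ_of_not τ _ (fun ⟨hh, hL⟩ => h2 hL)

lemma nextF_inj (τ : Perm (Fin n)) : Function.Injective (nextF τ) := by
  intro a b hab
  rcases endAt_or τ a with ha | ⟨ha1, ha2⟩ <;> rcases endAt_or τ b with hb | ⟨hb1, hb2⟩
  · -- both block ends: s τ a = s τ b
    rw [nextF_of_end ha, nextF_of_end hb] at hab
    by_contra hne
    rcases Ne.lt_or_gt (fun h : (a : ℕ) = (b : ℕ) => hne (Fin.ext h)) with h | h
    · -- a < b, so endAt a must be via an L at a+1 ≤ b
      rcases ha with ha' | ⟨ha1', ha2'⟩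
      · omega
      · have hidx : (⟨(a : ℕ) + 1, ha1'⟩ : Fin n) ≤ b := Fin.le_def.mpr (by simp; omega)
        have hgt : s τ b < (⟨(a : ℕ) + 1, ha1'⟩ : Fin n) := by
          rw [← hab]
          exact Fin.lt_def.mpr (lt_of_le_of_lt (Fin.le_def.mp (s_le τ a)) (by simp))
        exact s_greatest τ hgt hidx ha2'
    · rcases hb with hb' | ⟨hb1', hb2'⟩
      · omega
      · have hidx : (⟨(b : ℕ) + 1, hb1'⟩ : Fin n) ≤ a := Fin.le_def.mpr (by simp; omega)
        have hgt : s τ a < (⟨(b : ℕ) + 1, hb1'⟩ : Fin n) := by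
          rw [hab]
          exact Fin.lt_def.mpr (lt_of_le_of_lt (Fin.le_def.mp (s_le τ b)) (by simp))
        exact s_greatest τ hgt hidx hb2'
  · rw [nextF_of_end ha, nextF_of_not hb1 hb2] at hab
    exact absurd (hab ▸ L_s τ a) hb2
  · rw [nextF_of_not ha1 ha2, nextF_of_end hb] at hab
    exact absurd (hab ▸ L_s τ b) ha2
  · rw [nextF_of_not ha1 ha2, nextF_of_not hb1 hb2] at hab
    exact Fin.ext (by have := congrArg Fin.val hab; simp at this; omega)

/-- The Foata bijection. -/
noncomputable def Phi (τ : Perm (Fin n)) : Perm (Fin n) :=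
  τ * Equiv.ofBijective (nextF τ) (Finite.injective_iff_bijective.mp (nextF_inj τ)) * τ⁻¹

lemma Phi_apply (τ : Perm (Fin n)) (j : Fin n) : Phi τ (τ j) = τ (nextF τ j) := by
  simp [Phi, Equiv.Perm.mul_apply]

lemma Phi_iterate (τ : Perm (Fin n)) (m : ℕ) (j : Fin n) :
    (⇑(Phi τ))^[m] (τ j) = τ ((nextF τ)^[m] j) := by
  induction m generalizing j with
  | zero => rfl
  | succ m ih =>
    rw [Function.iterate_succ_apply, Function.iterate_succ_apply, Phi_apply, ih]

lemma s_iterate (τ : Perm (Fin n)) (m : ℕ) (j : Fin n) :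
    s τ ((nextF τ)^[m] j) = s τ j := by
  induction m generalizing j with
  | zero => rfl
  | succ m ih => rw [Function.iterate_succ_apply, ih, s_nextF]

lemma reach_aux (τ : Perm (Fin n)) : ∀ (k : ℕ) (j : Fin n), n - (j : ℕ) ≤ k →
    ∃ m, (nextF τ)^[m] j = s τ j := by
  intro k
  induction k with
  | zero => intro j hj; exact absurd hj (by have := j.isLt; omega)
  | succ k ih =>
    intro j hj
    rcases endAt_or τ j with h | ⟨h1, h2⟩
    · exact ⟨1, by simpa using nextF_of_end h⟩
    · obtain ⟨m, hm⟩ := ih ⟨(j : ℕ) + 1, h1⟩ (by simp; omega)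
      refine ⟨m + 1, ?_⟩
      rw [Function.iterate_succ_apply, nextF_of_not h1 h2, hm]
      rw [← nextF_of_not h1 h2, s_nextF]

lemma reach (τ : Perm (Fin n)) (j : Fin n) : ∃ m, (nextF τ)^[m] j = s τ j :=
  reach_aux τ n j (Nat.sub_le _ _)

/-- `v` is the minimum of its cycle. -/
def CM (π : Perm (Fin n)) (v : Fin n) : Prop := ∀ m : ℕ, v ≤ (⇑π)^[m] v

lemma CM_start (τ : Perm (Fin n)) {b : Fin n} (hb : L τ b) : CM (Phi τ) (τ b) := by
  intro m
  rw [Phi_iterate]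
  have h1 : s τ ((nextF τ)^[m] b) = s τ b := s_iterate τ m b
  have h2 := s_min τ n ((nextF τ)^[m] b) ((nextF τ)^[m] b)
    (le_of_lt ((nextF τ)^[m] b).isLt) le_rfl
  rwa [h1, s_eq_of_L hb] at h2

lemma key3 (τ : Perm (Fin n)) {b i : Fin n} (hb : L τ b) (hbi : b ≤ i)
    (hCM : CM (Phi τ) (τ i)) : τ i ≤ τ b := by
  obtain ⟨m, hm⟩ := reach τ i
  have h1 : τ i ≤ τ (s τ i) := by have := hCM m; rwa [Phi_iterate, hm] at this
  exact le_trans h1 (L_s τ i b (le_s τ hbi hb))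


lemma agree_le {τ τ' : Perm (Fin n)} (hπ : Phi τ = Phi τ') {j : Fin n}
    (hL : L τ j) (hL' : L τ' j) (hpref : ∀ l : Fin n, (l : ℕ) < (j : ℕ) → τ l = τ' l) :
    τ' j ≤ τ j := by
  set i := τ⁻¹ (τ' j) with hi
  have hσi : τ i = τ' j := Equiv.apply_symm_apply τ (τ' j)
  have hji : j ≤ i := by
    by_contra hc
    push_neg at hc
    have h1 : τ i = τ' i := hpref i (Fin.lt_def.mp hc)
    have h2 : τ' j = τ' i := by rw [← hσi, h1]
    have := τ'.injective h2
    exact absurd (this ▸ hc) (lt_irrefl _)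
  have hCM : CM (Phi τ) (τ i) := by rw [hσi, hπ]; exact CM_start τ' hL'
  calc τ' j = τ i := hσi.symm
    _ ≤ τ j := key3 τ hL hji hCM

lemma agree_at {τ τ' : Perm (Fin n)} (hπ : Phi τ = Phi τ') {j : Fin n}
    (hL : L τ j) (hL' : L τ' j) (hpref : ∀ l : Fin n, (l : ℕ) < (j : ℕ) → τ l = τ' l) :
    τ j = τ' j :=
  le_antisymm (agree_le hπ.symm hL' hL (fun l hl => (hpref l hl).symm)) (agree_le hπ hL hL' hpref)

lemma Phi_inj : Function.Injective (Phi : Perm (Fin n) → Perm (Fin n)) := by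
  intro τ τ' hπ
  have main : ∀ (m : ℕ) (j : Fin n), (j : ℕ) ≤ m → τ j = τ' j := by
    intro m
    induction m with
    | zero =>
      intro j hj
      have hj0 : (j : ℕ) = 0 := Nat.le_zero.mp hj
      exact agree_at hπ (L_of_val0 hj0) (L_of_val0 hj0) (fun l hl => absurd hl (by omega))
    | succ m ih =>
      intro j hj
      rcases Nat.lt_or_ge (j : ℕ) (m + 1) with h | h
      · exact ih j (by omega)
      · have hjv : (j : ℕ) = m + 1 := le_antisymm hj h
        have hmn : m < n := by have := j.isLt; omega
        set jp : Fin n := ⟨m, hmn⟩ with hjpdef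
        have hpref : ∀ l : Fin n, (l : ℕ) ≤ m → τ l = τ' l := fun l hl => ih l hl
        have hτjp : τ jp = τ' jp := hpref jp le_rfl
        have hj1n : (jp : ℕ) + 1 < n := by have := j.isLt; simp [hjpdef]; omega
        have hjeq : (⟨(jp : ℕ) + 1, hj1n⟩ : Fin n) = j := Fin.ext (by simp [hjpdef, hjv])
        have hsτ : ((s τ jp) : ℕ) ≤ m := sN_le τ (jp : ℕ)
        have hsτ' : ((s τ' jp) : ℕ) ≤ m := sN_le τ' (jp : ℕ)
        by_cases hLτj : L τ j
        · -- block end for τ at jp; show same for τ'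
          have hLτ'j : L τ' j := by
            by_contra hL'
            have e1 : Phi τ (τ jp) = τ (s τ jp) := by
              rw [Phi_apply, nextF_of_end (Or.inr ⟨hj1n, by rwa [hjeq]⟩)]
            have e2 : Phi τ' (τ' jp) = τ' j := by
              rw [Phi_apply, nextF_of_not hj1n (by rwa [hjeq]), hjeq]
            have e3 : τ' (s τ jp) = τ' j := by
              rw [← hpref _ hsτ, ← e1, hπ, hτjp, e2]
            have := congrArg Fin.val (τ'.injective e3)
            omega
          exact agree_at hπ hLτj hLτ'j (fun l hl => hpref l (by omega))
        · have hnL : ¬ L τ ⟨(jp : ℕ) + 1, hj1n⟩ := by rwa [hjeq]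
          have hnL' : ¬ L τ' ⟨(jp : ℕ) + 1, hj1n⟩ := by
            rw [hjeq]
            intro hL'
            have e1 : Phi τ (τ jp) = τ j := by
              rw [Phi_apply, nextF_of_not hj1n hnL, hjeq]
            have e2 : Phi τ' (τ' jp) = τ' (s τ' jp) := by
              rw [Phi_apply, nextF_of_end (Or.inr ⟨hj1n, by rwa [hjeq]⟩)]
            have e3 : τ j = τ (s τ' jp) := by
              rw [← e1, hπ, hτjp, e2, ← hpref _ hsτ']
            have := congrArg Fin.val (τ.injective e3)
            omega
          calc τ j = Phi τ (τ jp) := by rw [Phi_apply, nextF_of_not hj1n hnL, hjeq]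
            _ = Phi τ' (τ' jp) := by rw [hπ, hτjp]
            _ = τ' j := by rw [Phi_apply, nextF_of_not hj1n hnL', hjeq]
  exact Equiv.ext fun j => main n j (le_of_lt j.isLt)


lemma nextF_eq_self_iff (τ : Perm (Fin n)) (j : Fin n) :
    nextF τ j = j ↔ IsWaste τ j := by
  have hn : 0 < n := lt_of_le_of_lt (Nat.zero_le _) j.isLt
  constructor
  · intro h
    rcases endAt_or τ j with hE | ⟨h1, h2⟩
    · rw [nextF_of_end hE] at h
      have hLj : L τ j := h ▸ L_s τ j
      rcases hE with hE | ⟨h1, hL1⟩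
      · -- last index : value is 0
        left
        refine ⟨hE, ?_⟩
        have hall : ∀ l : Fin n, l ≤ j := fun l => Fin.le_def.mpr (by have := l.isLt; omega)
        have h2 := hLj (τ⁻¹ ⟨0, hn⟩) (hall _)
        have h3 : τ (τ⁻¹ ⟨0, hn⟩) = ⟨0, hn⟩ := Equiv.apply_symm_apply τ _
        rw [h3] at h2
        have := Fin.le_def.mp h2
        simpa using this
      · right
        refine ⟨h1, hLj, ?_⟩
        have hle : τ ⟨(j : ℕ) + 1, h1⟩ ≤ τ j := hL1 j (Fin.le_def.mpr (by simp))
        rcases lt_or_eq_of_le hle with hlt | heq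
        · exact hlt
        · exact absurd (congrArg Fin.val (τ.injective heq)) (by simp)
    · rw [nextF_of_not h1 h2] at h
      exact absurd (congrArg Fin.val h) (by simp)
  · intro hW
    rcases hW with ⟨h1, h0⟩ | ⟨h1, hL, hlt⟩
    · have hLj : L τ j := fun l _ => Fin.le_def.mpr (by omega)
      rw [nextF_of_end (Or.inl h1), s_eq_of_L hLj]
    · have hL1 : L τ ⟨(j : ℕ) + 1, h1⟩ := by
        intro l hl
        have hlv := Fin.le_def.mp hl
        simp at hlv
        rcases Nat.lt_or_ge (l : ℕ) ((j : ℕ) + 1) with hc | hc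
        · have : l ≤ j := Fin.le_def.mpr (by omega)
          exact le_of_lt (lt_of_lt_of_le hlt (hL l this))
        · have : l = ⟨(j : ℕ) + 1, h1⟩ := Fin.ext (by simp; omega)
          rw [this]
      rw [nextF_of_end (Or.inr ⟨h1, hL1⟩), s_eq_of_L hL]

lemma card_waste_eq_fix (τ : Perm (Fin n)) :
    Nat.card {j : Fin n // IsWaste τ j} = Nat.card {x : Fin n // Phi τ x = x} := by
  apply Nat.card_congr
  refine Equiv.subtypeEquiv (τ : Fin n ≃ Fin n) fun j => ?_
  rw [← nextF_eq_self_iff]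
  show nextF τ j = j ↔ Phi τ (τ j) = τ j
  rw [Phi_apply]
  exact ⟨fun h => by rw [h], fun h => τ.injective h⟩

end W13

/-- For every `n ≥ 1` and `0 ≤ k ≤ n`, there is a bijection between the
permutations of `{1,…,n}` with exactly `k` fixed points and those with exactly
`k` waste indices; in particular the two sets have equal cardinality. -/
theorem stmt_13 (n k : ℕ) (hn : 1 ≤ n) (hk : k ≤ n) :
    Nonempty
      ({π : Equiv.Perm (Fin n) // Nat.card {j : Fin n // π j = j} = k} ≃
       {τ : Equiv.Perm (Fin n) // Nat.card {j : Fin n // IsWaste τ j} = k}) ∧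
    Nat.card {π : Equiv.Perm (Fin n) // Nat.card {j : Fin n // π j = j} = k} =
      Nat.card {τ : Equiv.Perm (Fin n) // Nat.card {j : Fin n // IsWaste τ j} = k} := by
  classical
  let e : Equiv.Perm (Fin n) ≃ Equiv.Perm (Fin n) :=
    Equiv.ofBijective W13.Phi (Finite.injective_iff_bijective.mp W13.Phi_inj)
  have hcard : ∀ τ : Equiv.Perm (Fin n),
      Nat.card {j : Fin n // IsWaste τ j} = Nat.card {j : Fin n // e τ j = j} :=
    fun τ => W13.card_waste_eq_fix τ
  have E : {τ : Equiv.Perm (Fin n) // Nat.card {j : Fin n // IsWaste τ j} = k} ≃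
      {π : Equiv.Perm (Fin n) // Nat.card {j : Fin n // π j = j} = k} :=
    Equiv.subtypeEquiv e fun τ => by rw [hcard τ]
  exact ⟨⟨E.symm⟩, Nat.card_congr E.symm⟩
end

section
/- The number of permutations of {1,...,n} with no waste index equals the subfactorial !n (the number of derangements of n elements). -/
namespace FoataAux

variable {n : ℕ}

/-- `j` is a left-to-right minimum position of the word `τ 0, τ 1, …`. -/
def IsMinIdx (τ : Equiv.Perm (Fin n)) (j : Fin n) : Prop := ∀ l ≤ j, τ j ≤ τ l

instance (τ : Equiv.Perm (Fin n)) : DecidablePred (IsMinIdx τ) := fun _ =>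
  inferInstanceAs (Decidable (∀ _, _))

theorem isMinIdx_zero (τ : Equiv.Perm (Fin n)) (h : 0 < n) : IsMinIdx τ ⟨0, h⟩ := by
  intro l hl
  have : l = ⟨0, h⟩ := le_antisymm hl (by simp [Fin.le_def])
  rw [this]

/-- The set of left-to-right minimum positions ≤ j. -/
def startSet (τ : Equiv.Perm (Fin n)) (j : Fin n) : Finset (Fin n) :=
  (Finset.Iic j).filter (IsMinIdx τ)

theorem startSet_nonempty (τ : Equiv.Perm (Fin n)) (j : Fin n) : (startSet τ j).Nonempty :=
  ⟨⟨0, j.pos⟩, by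
    simp only [startSet, Finset.mem_filter, Finset.mem_Iic]
    exact ⟨by simp [Fin.le_def], isMinIdx_zero τ j.pos⟩⟩

/-- The most recent left-to-right minimum position at or before `j`. -/
def startIdx (τ : Equiv.Perm (Fin n)) (j : Fin n) : Fin n :=
  (startSet τ j).max' (startSet_nonempty τ j)

theorem startIdx_mem (τ : Equiv.Perm (Fin n)) (j : Fin n) : startIdx τ j ∈ startSet τ j :=
  Finset.max'_mem _ _

theorem startIdx_le (τ : Equiv.Perm (Fin n)) (j : Fin n) : startIdx τ j ≤ j := by
  have := startIdx_mem τ j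
  simp only [startSet, Finset.mem_filter, Finset.mem_Iic] at this
  exact this.1

theorem isMinIdx_startIdx (τ : Equiv.Perm (Fin n)) (j : Fin n) : IsMinIdx τ (startIdx τ j) := by
  have := startIdx_mem τ j
  simp only [startSet, Finset.mem_filter, Finset.mem_Iic] at this
  exact this.2

theorem le_startIdx {τ : Equiv.Perm (Fin n)} {i j : Fin n} (hi : IsMinIdx τ i) (hij : i ≤ j) :
    i ≤ startIdx τ j :=
  Finset.le_max' _ _ (by simp only [startSet, Finset.mem_filter, Finset.mem_Iic]; exact ⟨hij, hi⟩)

theorem startIdx_eq_self {τ : Equiv.Perm (Fin n)} {j : Fin n} (h : IsMinIdx τ j) :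
    startIdx τ j = j :=
  le_antisymm (startIdx_le τ j) (le_startIdx h le_rfl)

/-- The value at `startIdx τ j` is the prefix minimum up to `j`. -/
theorem startIdx_min (τ : Equiv.Perm (Fin n)) (j : Fin n) : ∀ l ≤ j, τ (startIdx τ j) ≤ τ l := by
  obtain ⟨m, hm, hmin⟩ := Finset.exists_min_image (Finset.Iic j) (fun l => τ l) ⟨j, by simp⟩
  rw [Finset.mem_Iic] at hm
  have hmmin : IsMinIdx τ m := fun l hl => hmin l (Finset.mem_Iic.mpr (le_trans hl hm))
  intro l hl
  exact le_trans (isMinIdx_startIdx τ j m (le_startIdx hmmin hm)) (hmin l (Finset.mem_Iic.mpr hl))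

theorem startIdx_between {τ : Equiv.Perm (Fin n)} {j k : Fin n}
    (h1 : startIdx τ j ≤ k) (h2 : k ≤ j) : startIdx τ k = startIdx τ j := by
  refine le_antisymm ?_ (le_startIdx (isMinIdx_startIdx τ j) h1)
  exact le_startIdx (isMinIdx_startIdx τ k) (le_trans (startIdx_le τ k) h2)

/-- The "next position" map: `j ↦ j+1` inside a block, and the last position of a block
maps back to the block's start. -/
def nextIdx (τ : Equiv.Perm (Fin n)) (j : Fin n) : Fin n :=
  if h : (j : ℕ) + 1 < n then
    if IsMinIdx τ ⟨(j : ℕ) + 1, h⟩ then startIdx τ j else ⟨(j : ℕ) + 1, h⟩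
  else startIdx τ j

theorem nextIdx_of_notMin {τ : Equiv.Perm (Fin n)} {j : Fin n} (h : (j : ℕ) + 1 < n)
    (hm : ¬ IsMinIdx τ ⟨(j : ℕ) + 1, h⟩) : nextIdx τ j = ⟨(j : ℕ) + 1, h⟩ := by
  rw [nextIdx, dif_pos h, if_neg hm]

theorem nextIdx_of_min {τ : Equiv.Perm (Fin n)} {j : Fin n} (h : (j : ℕ) + 1 < n)
    (hm : IsMinIdx τ ⟨(j : ℕ) + 1, h⟩) : nextIdx τ j = startIdx τ j := by
  rw [nextIdx, dif_pos h, if_pos hm]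

theorem nextIdx_of_last {τ : Equiv.Perm (Fin n)} {j : Fin n} (h : ¬ (j : ℕ) + 1 < n) :
    nextIdx τ j = startIdx τ j := by
  rw [nextIdx, dif_neg h]

theorem nextIdx_cases (τ : Equiv.Perm (Fin n)) (j : Fin n) :
    nextIdx τ j = startIdx τ j ∨
      ∃ h : (j : ℕ) + 1 < n, ¬ IsMinIdx τ ⟨(j : ℕ) + 1, h⟩ ∧ nextIdx τ j = ⟨(j : ℕ) + 1, h⟩ := by
  by_cases h : (j : ℕ) + 1 < n
  · by_cases hm : IsMinIdx τ ⟨(j : ℕ) + 1, h⟩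
    · exact Or.inl (nextIdx_of_min h hm)
    · exact Or.inr ⟨h, hm, nextIdx_of_notMin h hm⟩
  · exact Or.inl (nextIdx_of_last h)

theorem min_succ_of_nextIdx_eq_start {τ : Equiv.Perm (Fin n)} {j : Fin n}
    (hj : nextIdx τ j = startIdx τ j) (h1 : (j : ℕ) + 1 < n) : IsMinIdx τ ⟨(j : ℕ) + 1, h1⟩ := by
  by_contra hm
  rw [nextIdx_of_notMin h1 hm] at hj
  have h2 := startIdx_le τ j
  rw [← hj] at h2
  have h3 : (j : ℕ) + 1 ≤ (j : ℕ) := h2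
  omega

theorem nextIdx_injective (τ : Equiv.Perm (Fin n)) : Function.Injective (nextIdx τ) := by
  have key : ∀ j k : Fin n, nextIdx τ j = startIdx τ j → nextIdx τ k = startIdx τ k →
      nextIdx τ j = nextIdx τ k → j < k → False := by
    intro j k hj hk he hlt
    have h1 : (j : ℕ) + 1 < n := by
      have := k.2; rw [Fin.lt_def] at hlt; omega
    have hmin := min_succ_of_nextIdx_eq_start hj h1
    have h2 : (⟨(j : ℕ) + 1, h1⟩ : Fin n) ≤ startIdx τ k :=
      le_startIdx hmin (by rw [Fin.le_def]; rw [Fin.lt_def] at hlt; exact hlt)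
    rw [← hk, ← he, hj] at h2
    have h3 : (j : ℕ) + 1 ≤ ((startIdx τ j : Fin n) : ℕ) := h2
    have h4 : ((startIdx τ j : Fin n) : ℕ) ≤ (j : ℕ) := startIdx_le τ j
    omega
  intro j k he
  rcases nextIdx_cases τ j with hj | ⟨hj1, hjm, hj⟩ <;>
    rcases nextIdx_cases τ k with hk | ⟨hk1, hkm, hk⟩
  · rcases lt_trichotomy j k with h | h | h
    · exact absurd (key j k hj hk he h) (by simp)
    · exact h
    · exact absurd (key k j hk hj he.symm h) (by simp)
  · exfalso; apply hkm
    have : startIdx τ j = ⟨(k : ℕ) + 1, hk1⟩ := by rw [← hj, he, hk]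
    exact this ▸ isMinIdx_startIdx τ j
  · exfalso; apply hjm
    have : startIdx τ k = ⟨(j : ℕ) + 1, hj1⟩ := by rw [← hk, ← he, hj]
    exact this ▸ isMinIdx_startIdx τ k
  · rw [hj, hk, Fin.mk.injEq] at he
    exact Fin.ext (by omega)

/-- Foata's fundamental bijection (word → permutation with the blocks as cycles). -/
noncomputable def foata (τ : Equiv.Perm (Fin n)) : Equiv.Perm (Fin n) :=
  Equiv.ofBijective (fun x => τ (nextIdx τ (τ.symm x)))
    (Finite.injective_iff_bijective.mp
      (τ.injective.comp ((nextIdx_injective τ).comp τ.symm.injective)))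

theorem foata_apply (τ : Equiv.Perm (Fin n)) (x : Fin n) :
    foata τ x = τ (nextIdx τ (τ.symm x)) := rfl

theorem foata_tau (τ : Equiv.Perm (Fin n)) (j : Fin n) :
    foata τ (τ j) = τ (nextIdx τ j) := by rw [foata_apply, Equiv.symm_apply_apply]

/-! ### The no-waste ↔ derangement correspondence -/

theorem waste_to_fix {τ : Equiv.Perm (Fin n)} {j : Fin n} (hw : IsWaste τ j) :
    foata τ (τ j) = τ j := by
  rw [foata_tau]
  rcases hw with ⟨h1, h0⟩ | ⟨h1, hmin, hlt⟩
  · have hm : IsMinIdx τ j := by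
      intro l hl
      rw [Fin.le_def, h0]
      omega
    rw [nextIdx_of_last (by omega), startIdx_eq_self hm]
  · have hm1 : IsMinIdx τ ⟨(j : ℕ) + 1, h1⟩ := by
      intro l hl
      rcases eq_or_lt_of_le hl with he | hlt'
      · rw [← he]
      · have : l ≤ j := by rw [Fin.le_def]; rw [Fin.lt_def] at hlt'; simp at hlt'; omega
        exact le_of_lt (lt_of_lt_of_le hlt (hmin l this))
  
    rw [nextIdx_of_min h1 hm1, startIdx_eq_self hmin]

theorem fix_to_waste {τ : Equiv.Perm (Fin n)} {x : Fin n} (hf : foata τ x = x) :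
    ∃ j, IsWaste τ j := by
  set j := τ.symm x with hj
  have hx : x = τ j := (Equiv.apply_symm_apply τ x).symm
  have hfix : nextIdx τ j = j := by
    apply τ.injective
    rw [← foata_tau, ← hx, hf]
  have hstart : startIdx τ j = j := by
    rcases nextIdx_cases τ j with h | ⟨h1, hm, h⟩
    · rw [← h, hfix]
    · rw [hfix] at h
      exfalso
      have : (j : ℕ) = (j : ℕ) + 1 := congrArg Fin.val h
      omega
  have hmin : IsMinIdx τ j := hstart ▸ isMinIdx_startIdx τ j
  refine ⟨j, ?_⟩
  by_cases h1 : (j : ℕ) + 1 < n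
  · have hm1 : IsMinIdx τ ⟨(j : ℕ) + 1, h1⟩ := by
      apply min_succ_of_nextIdx_eq_start _ h1
      rw [hfix, hstart]
    refine Or.inr ⟨h1, hmin, ?_⟩
    have hle : τ ⟨(j : ℕ) + 1, h1⟩ ≤ τ j := hm1 j (by rw [Fin.le_def]; simp)
    have hne : τ ⟨(j : ℕ) + 1, h1⟩ ≠ τ j := by
      intro he
      have := τ.injective he
      have := congrArg Fin.val this
      simp at this
    exact lt_of_le_of_ne hle hne
  · refine Or.inl ⟨by have := j.2; omega, ?_⟩
    have hall : ∀ l : Fin n, l ≤ j := by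
      intro l
      rw [Fin.le_def]
      have := l.2; have := j.2
      omega
    have h0 := hmin (τ.symm ⟨0, j.pos⟩) (hall _)
    simp only [Equiv.apply_symm_apply] at h0
    have h2 : ((τ j : Fin n) : ℕ) ≤ 0 := h0
    omega

theorem noWaste_iff_derangement (τ : Equiv.Perm (Fin n)) :
    (∀ j : Fin n, ¬ IsWaste τ j) ↔ foata τ ∈ derangements (Fin n) := by
  constructor
  · intro h x hx
    obtain ⟨j, hj⟩ := fix_to_waste hx
    exact h j hj
  · intro h j hj
    exact h (τ j) (waste_to_fix hj)

/-! ### Injectivity of `foata` -/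

/-- The minimum of the cycle of `σ` containing `x`. -/
def minCyc (σ : Equiv.Perm (Fin n)) (x : Fin n) : Fin n :=
  (Finset.univ.filter (σ.SameCycle x)).min'
    ⟨x, by simp [Equiv.Perm.SameCycle.refl]⟩

theorem start_next (τ : Equiv.Perm (Fin n)) (j : Fin n) :
    startIdx τ (nextIdx τ j) = startIdx τ j := by
  rcases nextIdx_cases τ j with h | ⟨h1, hm, h⟩
  · rw [h, startIdx_eq_self (isMinIdx_startIdx τ j)]
  · rw [h]
    refine le_antisymm ?_
      (le_startIdx (isMinIdx_startIdx τ j)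
        (le_trans (startIdx_le τ j) (by rw [Fin.le_def]; simp)))
    have h3 := isMinIdx_startIdx τ ⟨(j : ℕ) + 1, h1⟩
    have h4 : startIdx τ ⟨(j : ℕ) + 1, h1⟩ ≠ ⟨(j : ℕ) + 1, h1⟩ := fun he => hm (he ▸ h3)
    have h5 : startIdx τ ⟨(j : ℕ) + 1, h1⟩ ≤ j := by
      have h2 := startIdx_le τ ⟨(j : ℕ) + 1, h1⟩
      rw [Fin.le_def] at h2 ⊢
      simp only at h2
      rcases eq_or_lt_of_le h2 with he | hlt
      · exact absurd (Fin.ext he) h4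
      · omega
    exact le_startIdx h3 h5

theorem start_inv_pow (τ : Equiv.Perm (Fin n)) (i : ℕ) :
    ∀ x : Fin n, startIdx τ (τ.symm ((foata τ ^ i) x)) = startIdx τ (τ.symm x) := by
  induction i with
  | zero => simp
  | succ i IH =>
    intro x
    have h1 : (foata τ ^ (i + 1)) x = (foata τ ^ i) (foata τ x) := by
      rw [pow_succ, Equiv.Perm.mul_apply]
    rw [h1, IH (foata τ x), foata_apply, Equiv.symm_apply_apply, start_next]

theorem start_inv (τ : Equiv.Perm (Fin n)) {x y : Fin n} (hc : (foata τ).SameCycle x y) :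
    startIdx τ (τ.symm x) = startIdx τ (τ.symm y) := by
  obtain ⟨i, -, -, hi⟩ := hc.exists_pow_eq (foata τ)
  rw [← hi, start_inv_pow]

theorem sameCycle_start (τ : Equiv.Perm (Fin n)) :
    ∀ (m : ℕ) (hm : m < n), (foata τ).SameCycle (τ (startIdx τ ⟨m, hm⟩)) (τ ⟨m, hm⟩) := by
  intro m
  induction m using Nat.strong_induction_on with
  | _ m IH =>
    intro hm
    by_cases hmin : IsMinIdx τ ⟨m, hm⟩
    · rw [startIdx_eq_self hmin]
    · have hm0 : m ≠ 0 := by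
        intro he
        subst he
        exact hmin (isMinIdx_zero τ hm)
      obtain ⟨k, rfl⟩ := Nat.exists_eq_succ_of_ne_zero hm0
      have hk : k < n := by omega
      have hnext : nextIdx τ ⟨k, hk⟩ = ⟨k + 1, hm⟩ := nextIdx_of_notMin hm hmin
      have hstep : foata τ (τ ⟨k, hk⟩) = τ ⟨k + 1, hm⟩ := by rw [foata_tau, hnext]
      have hsc : (foata τ).SameCycle (τ ⟨k, hk⟩) (τ ⟨k + 1, hm⟩) := by
        rw [← hstep]
        exact ⟨1, by simp⟩
      have hse : startIdx τ ⟨k, hk⟩ = startIdx τ ⟨k + 1, hm⟩ := by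
        apply startIdx_between
        · have h2 := startIdx_le τ ⟨k + 1, hm⟩
          have h4 : startIdx τ ⟨k + 1, hm⟩ ≠ ⟨k + 1, hm⟩ :=
            fun he => hmin (he ▸ isMinIdx_startIdx τ ⟨k + 1, hm⟩)
          rw [Fin.le_def] at h2 ⊢
          simp only at h2 ⊢
          rcases eq_or_lt_of_le h2 with he | hlt
          · exact absurd (Fin.ext he) h4
          · omega
        · rw [Fin.le_def]; simp
      rw [← hse]
      exact (IH k (by omega) hk).trans hsc

theorem minCyc_foata (τ : Equiv.Perm (Fin n)) (k : Fin n) :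
    minCyc (foata τ) (τ k) = τ (startIdx τ k) := by
  have hksc : (foata τ).SameCycle (τ k) (τ (startIdx τ k)) := by
    have := sameCycle_start τ (k : ℕ) k.2
    simp only [Fin.eta] at this
    exact this.symm
  apply le_antisymm
  · exact Finset.min'_le _ _ (by simp [hksc])
  · apply Finset.le_min'
    intro y hy
    simp only [Finset.mem_filter, Finset.mem_univ, true_and] at hy
    have h1 : startIdx τ k = startIdx τ (τ.symm y) := by
      have := start_inv τ hy
      rwa [Equiv.symm_apply_apply] at this
    calc τ (startIdx τ k) = τ (startIdx τ (τ.symm y)) := by rw [h1]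
      _ ≤ τ (τ.symm y) := startIdx_min τ (τ.symm y) (τ.symm y) le_rfl
      _ = y := Equiv.apply_symm_apply τ y

/-- Recovery of a left-to-right minimum value from `foata τ` and the earlier values. -/
theorem recover_min (τ : Equiv.Perm (Fin n)) {j : Fin n} (hm : IsMinIdx τ j) :
    IsGreatest (minCyc (foata τ) '' {x : Fin n | ∀ i, i < j → τ i ≠ x}) (τ j) := by
  constructor
  · refine ⟨τ j, fun i hi he => ?_, ?_⟩
    · exact absurd (τ.injective he) (ne_of_lt hi)
    · rw [minCyc_foata, startIdx_eq_self hm]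
  · rintro y ⟨x, hx, rfl⟩
    set k := τ.symm x with hk
    have hxk : x = τ k := (Equiv.apply_symm_apply τ x).symm
    have hjk : j ≤ k := by
      by_contra h
      exact hx k (lt_of_not_ge h) hxk.symm
    rw [hxk, minCyc_foata]
    exact isMinIdx_startIdx τ k j (le_startIdx hm hjk)

theorem min_succ_iff (τ : Equiv.Perm (Fin n)) (k : ℕ) (hk : k < n) (hk1 : k + 1 < n) :
    IsMinIdx τ ⟨k + 1, hk1⟩ ↔ foata τ (τ ⟨k, hk⟩) = τ (startIdx τ ⟨k, hk⟩) := by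
  constructor
  · intro h
    rw [foata_tau, nextIdx_of_min hk1 h]
  · intro h
    by_contra hmin
    rw [foata_tau, nextIdx_of_notMin hk1 hmin] at h
    have := τ.injective h
    have h2 := startIdx_le τ ⟨k, hk⟩
    rw [← this, Fin.le_def] at h2
    simp at h2
  
theorem recover_step (τ : Equiv.Perm (Fin n)) (k : ℕ) (hk : k < n) (hk1 : k + 1 < n)
    (h : ¬ IsMinIdx τ ⟨k + 1, hk1⟩) : τ ⟨k + 1, hk1⟩ = foata τ (τ ⟨k, hk⟩) := by
  rw [foata_tau, nextIdx_of_notMin hk1 h]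

theorem foata_injective : Function.Injective (foata (n := n)) := by
  intro τ τ' hσ
  suffices h : ∀ (m : ℕ) (hm : m < n), τ ⟨m, hm⟩ = τ' ⟨m, hm⟩ by
    apply Equiv.ext
    intro x
    have := h (x : ℕ) x.2
    simpa using this
  intro m
  induction m using Nat.strong_induction_on with
  | _ m IH =>
    intro hm
    have hagree : ∀ i : Fin n, (i : ℕ) < m → τ i = τ' i := by
      intro i hi
      have := IH (i : ℕ) hi i.2
      simpa using this
    have hminiff : ∀ i : Fin n, (i : ℕ) < m → (IsMinIdx τ i ↔ IsMinIdx τ' i) := by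
      intro i hi
      unfold IsMinIdx
      constructor <;> intro h l hl
      · rw [← hagree i hi, ← hagree l (by rw [Fin.le_def] at hl; omega)]; exact h l hl
      · rw [hagree i hi, hagree l (by rw [Fin.le_def] at hl; omega)]; exact h l hl
    have hstart : ∀ i : Fin n, (i : ℕ) < m → startIdx τ i = startIdx τ' i := by
      intro i hi
      have hss : startSet τ i = startSet τ' i := by
        unfold startSet
        apply Finset.filter_congr
        intro l hl
        rw [Finset.mem_Iic, Fin.le_def] at hl
        exact hminiff l (by omega)
      unfold startIdx
      congr 1
    have hset : {x : Fin n | ∀ i, i < (⟨m, hm⟩ : Fin n) → τ i ≠ x} =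
        {x : Fin n | ∀ i, i < (⟨m, hm⟩ : Fin n) → τ' i ≠ x} := by
      ext x
      simp only [Set.mem_setOf_eq]
      constructor <;> intro h i hi
      · rw [← hagree i (by rw [Fin.lt_def] at hi; exact hi)]; exact h i hi
      · rw [hagree i (by rw [Fin.lt_def] at hi; exact hi)]; exact h i hi
    match m with
    | 0 =>
      have g1 := recover_min τ (isMinIdx_zero τ hm)
      have g2 := recover_min τ' (isMinIdx_zero τ' hm)
      rw [← hσ, ← hset] at g2
      exact g1.unique g2
    | k + 1 =>
      have hk : k < n := by omega
      have hτk : τ ⟨k, hk⟩ = τ' ⟨k, hk⟩ := hagree ⟨k, hk⟩ (by exact Nat.lt_succ_self k)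
      have hsk : startIdx τ ⟨k, hk⟩ = startIdx τ' ⟨k, hk⟩ := hstart ⟨k, hk⟩ (by exact Nat.lt_succ_self k)
      have hsv : τ (startIdx τ ⟨k, hk⟩) = τ' (startIdx τ' ⟨k, hk⟩) := by
        rw [← hsk]
        apply hagree
        have h2 : ((startIdx τ ⟨k, hk⟩ : Fin n) : ℕ) ≤ k := startIdx_le τ ⟨k, hk⟩
        omega
      have hchar : IsMinIdx τ ⟨k + 1, hm⟩ ↔ IsMinIdx τ' ⟨k + 1, hm⟩ := by
        rw [min_succ_iff τ k hk hm, min_succ_iff τ' k hk hm, ← hσ, ← hτk, ← hsv]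
      by_cases hmin : IsMinIdx τ ⟨k + 1, hm⟩
      · have hmin' := hchar.mp hmin
        have g1 := recover_min τ hmin
        have g2 := recover_min τ' hmin'
        rw [← hσ, ← hset] at g2
        exact g1.unique g2
      · have hmin' := fun h => hmin (hchar.mpr h)
        rw [recover_step τ k hk hm hmin, recover_step τ' k hk hm hmin', ← hσ, ← hτk]

end FoataAux


/-- The number of permutations of `{1,…,n}` with no waste index equals the
subfactorial `!n`, the number of derangements of `n` elements. -/
theorem stmt_14 (n : ℕ) :
    Nat.card {τ : Equiv.Perm (Fin n) // ∀ j : Fin n, ¬ IsWaste τ j} =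
      numDerangements n := by
  have e : {τ : Equiv.Perm (Fin n) // ∀ j : Fin n, ¬ IsWaste τ j} ≃ (derangements (Fin n)) :=
    Equiv.subtypeEquiv
      (Equiv.ofBijective FoataAux.foata
        (Finite.injective_iff_bijective.mp FoataAux.foata_injective))
      (fun τ => FoataAux.noWaste_iff_derangement τ)
  rw [Nat.card_congr e, Nat.card_eq_fintype_card, card_derangements_fin_eq_numDerangements]
end
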